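/- Let C be a bounded convex subset of M with nonempty interior and 0 ∈ int C, and let W : ℝ^d × M → [0,+∞] be Borel measurable, Y-periodic in its first variable (Y = (0,1)^d), with W(x,ξ) = +∞ whenever ξ ∉ cl(C). Assume (H1): for every ε > 0 there exists η > 0 such that for every x ∈ ℝ^d, every ξ with W(x,ξ) < +∞ and every t ∈ [0,1), 1−t ≤ η implies W(x,tξ) ≤ W(x,ξ) + ε; and assume (H2): for every compact K ⊆ int C, the function x ↦ sup_{ξ∈K} W(x,ξ) is essentially bounded on every compact subset of ℝ^d. Then the homogenized density HW is r.u.u.s.c. in its effective domain: for every ε > 0 there exists η > 0 such that for every ξ ∈ M with HW(ξ) < +∞ and every t ∈ [0,1), 1−t ≤ η implies HW(tξ) ≤ HW(ξ) + ε. -/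

import Mathlib

open MeasureTheory Filter
open scoped ENNReal Topology

/-- The open cube `(0,n)^d` in `ℝ^d`. -/
def cube (d n : ℕ) : Set (Fin d → ℝ) := {x | ∀ i, x i ∈ Set.Ioo (0 : ℝ) (n : ℝ)}

/-- The homogenized density. -/
noncomputable def HF {d m : ℕ}
    (F : (Fin d → ℝ) → ((Fin d → ℝ) →L[ℝ] (Fin m → ℝ)) → ℝ≥0∞)
    (ξ : (Fin d → ℝ) →L[ℝ] (Fin m → ℝ)) : ℝ≥0∞ :=
  ⨅ (n : ℕ) (_ : 1 ≤ n),
    (1 / (n : ℝ≥0∞) ^ d) *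
      ⨅ (φ : (Fin d → ℝ) → (Fin m → ℝ)) (_ : ∃ K, LipschitzWith K φ)
        (_ : ∀ x ∉ cube d n, φ x = 0),
        ∫⁻ x in cube d n, F x (ξ + fderiv ℝ φ x) ∂volume

/-! Scaling a competitor `φ` of the cell problem for `ξ` by `t` gives a competitor for `t • ξ`
whose gradient field is `t • (ξ + Dφ)`. Hence a pointwise bound `F x (t • ζ) ≤ F x ζ + c`
passes to `HF`, the constant `c` surviving the averaging over the cube; (H1) is such a bound
with `c = ε`, trivially so where `W x ζ = ⊤`. -/

section Homogenization

variable {d m : ℕ} {F : (Fin d → ℝ) → ((Fin d → ℝ) →L[ℝ] (Fin m → ℝ)) → ℝ≥0∞}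
  {ξ : (Fin d → ℝ) →L[ℝ] (Fin m → ℝ)}

lemma cube_eq_pi (d n : ℕ) : cube d n = Set.univ.pi fun _ : Fin d => Set.Ioo (0 : ℝ) n := by
  ext x
  simp [cube, Set.mem_pi]

lemma volume_cube (d n : ℕ) : volume (cube d n) = (n : ℝ≥0∞) ^ d := by
  simp [cube_eq_pi, volume_pi_pi, Real.volume_Ioo]

lemma one_div_mul_setLIntegral_cube_add_const {n : ℕ} (hn : 1 ≤ n) (f : (Fin d → ℝ) → ℝ≥0∞)
    (c : ℝ≥0∞) :
    1 / (n : ℝ≥0∞) ^ d * ∫⁻ x in cube d n, (f x + c) =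
      1 / (n : ℝ≥0∞) ^ d * (∫⁻ x in cube d n, f x) + c := by
  have hn₀ : (n : ℝ≥0∞) ^ d ≠ 0 := pow_ne_zero d (Nat.cast_ne_zero.mpr (by omega))
  rw [lintegral_add_right _ measurable_const, setLIntegral_const, volume_cube, mul_add,
    mul_comm c, ← mul_assoc, one_div, ENNReal.inv_mul_cancel hn₀ (by simp), one_mul]

lemma HF_le_of_lipschitz {n : ℕ} (hn : 1 ≤ n) {φ : (Fin d → ℝ) → (Fin m → ℝ)}
    (hφ : ∃ K, LipschitzWith K φ) (hφ₀ : ∀ x ∉ cube d n, φ x = 0) :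
    HF F ξ ≤ 1 / (n : ℝ≥0∞) ^ d * ∫⁻ x in cube d n, F x (ξ + fderiv ℝ φ x) :=
  (iInf₂_le n hn).trans (mul_le_mul_right ((iInf₂_le φ hφ).trans (iInf_le _ hφ₀)) _)

lemma le_HF_add {b c : ℝ≥0∞}
    (h : ∀ n : ℕ, 1 ≤ n → ∀ φ : (Fin d → ℝ) → (Fin m → ℝ), (∃ K, LipschitzWith K φ) →
      (∀ x ∉ cube d n, φ x = 0) →
        b ≤ 1 / (n : ℝ≥0∞) ^ d * (∫⁻ x in cube d n, F x (ξ + fderiv ℝ φ x)) + c) :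
    b ≤ HF F ξ + c := by
  simp only [HF, ENNReal.iInf_add]
  refine le_iInf₂ fun n hn => ?_
  have hn₀ : n ≠ 0 := by omega
  simp only [ENNReal.mul_iInf_of_ne (a := 1 / (n : ℝ≥0∞) ^ d) (by simp) (by simp [hn₀]),
    ENNReal.iInf_add]
  exact le_iInf₂ fun φ hφ => le_iInf (h n hn φ hφ)

lemma HF_smul_le_add {t : ℝ} {c : ℝ≥0∞} (hF : ∀ x ζ, F x (t • ζ) ≤ F x ζ + c) :
    HF F (t • ξ) ≤ HF F ξ + c := by
  refine le_HF_add fun n hn φ hφ hφ₀ => ?_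
  have htφ : ∃ K, LipschitzWith K (t • φ) := by
    obtain ⟨K, hK⟩ := hφ
    exact ⟨_, (lipschitzWith_smul t).comp hK⟩
  have htφ₀ : ∀ x ∉ cube d n, (t • φ) x = 0 := fun x hx => by simp [hφ₀ x hx]
  calc HF F (t • ξ)
      ≤ 1 / (n : ℝ≥0∞) ^ d * ∫⁻ x in cube d n, F x (t • ξ + fderiv ℝ (t • φ) x) :=
        HF_le_of_lipschitz hn htφ htφ₀
    _ = 1 / (n : ℝ≥0∞) ^ d * ∫⁻ x in cube d n, F x (t • (ξ + fderiv ℝ φ x)) := by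
        simp only [fderiv_const_smul_field, Pi.smul_apply, smul_add]
    _ ≤ 1 / (n : ℝ≥0∞) ^ d * ∫⁻ x in cube d n, (F x (ξ + fderiv ℝ φ x) + c) := by
        gcongr with x
        exact hF x _
    _ = 1 / (n : ℝ≥0∞) ^ d * (∫⁻ x in cube d n, F x (ξ + fderiv ℝ φ x)) + c :=
        one_div_mul_setLIntegral_cube_add_const hn _ c

end Homogenization

theorem stmt_18_general {d m : ℕ}
    (W : (Fin d → ℝ) → ((Fin d → ℝ) →L[ℝ] (Fin m → ℝ)) → ℝ≥0∞)
    (hH1 : ∀ ε : ℝ, 0 < ε → ∃ η : ℝ, 0 < η ∧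
      ∀ (x : Fin d → ℝ) (ξ : (Fin d → ℝ) →L[ℝ] (Fin m → ℝ)), W x ξ ≠ ⊤ →
        ∀ t ∈ Set.Ico (0 : ℝ) 1, 1 - t ≤ η → W x (t • ξ) ≤ W x ξ + ENNReal.ofReal ε) :
    ∀ ε : ℝ, 0 < ε → ∃ η : ℝ, 0 < η ∧
      ∀ ξ : (Fin d → ℝ) →L[ℝ] (Fin m → ℝ), HF W ξ ≠ ⊤ →
        ∀ t ∈ Set.Ico (0 : ℝ) 1, 1 - t ≤ η → HF W (t • ξ) ≤ HF W ξ + ENNReal.ofReal ε := by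
  intro ε hε
  obtain ⟨η, hη, hW⟩ := hH1 ε hε
  refine ⟨η, hη, fun ξ _ t ht htη => HF_smul_le_add fun x ζ => ?_⟩
  by_cases hζ : W x ζ = ⊤
  · simp [hζ]
  · exact hW x ζ hζ t ht htη

/-- Under (H1) and (H2), the homogenized density `HW` is radially uniformly
upper semicontinuous on its effective domain. -/
theorem stmt_18 {d m : ℕ} (hd : 0 < d)
    {C : Set ((Fin d → ℝ) →L[ℝ] (Fin m → ℝ))}
    (hconv : Convex ℝ C) (hbdd : Bornology.IsBounded C)
    (hint : (interior C).Nonempty) (h0 : 0 ∈ interior C)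
    (W : (Fin d → ℝ) → ((Fin d → ℝ) →L[ℝ] (Fin m → ℝ)) → ℝ≥0∞)
    (hWmeas : Measurable (Function.uncurry W))
    (hWper : ∀ (x : Fin d → ℝ) (ξ : (Fin d → ℝ) →L[ℝ] (Fin m → ℝ)) (z : Fin d → ℤ),
      W (x + fun i => (z i : ℝ)) ξ = W x ξ)
    (hdom : ∀ x ξ, ξ ∉ closure C → W x ξ = ⊤)
    (hH1 : ∀ ε : ℝ, 0 < ε → ∃ η : ℝ, 0 < η ∧
      ∀ (x : Fin d → ℝ) (ξ : (Fin d → ℝ) →L[ℝ] (Fin m → ℝ)), W x ξ ≠ ⊤ →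
        ∀ t ∈ Set.Ico (0 : ℝ) 1, 1 - t ≤ η → W x (t • ξ) ≤ W x ξ + ENNReal.ofReal ε)
    (hH2 : ∀ K : Set ((Fin d → ℝ) →L[ℝ] (Fin m → ℝ)), IsCompact K → K ⊆ interior C →
      ∀ Q : Set (Fin d → ℝ), IsCompact Q →
        essSup (fun x => ⨆ ξ ∈ K, W x ξ) (volume.restrict Q) < ⊤) :
    ∀ ε : ℝ, 0 < ε → ∃ η : ℝ, 0 < η ∧
      ∀ ξ : (Fin d → ℝ) →L[ℝ] (Fin m → ℝ), HF W ξ ≠ ⊤ →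
        ∀ t ∈ Set.Ico (0 : ℝ) 1, 1 - t ≤ η → HF W (t • ξ) ≤ HF W ξ + ENNReal.ofReal ε :=
  stmt_18_general W hH1
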